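/- arXiv:2004.01850 — 3 statements merged into one kernel-verified Lean document; each statement's English description precedes it below -/
import Mathlib

section
/- Let (A,B) be a pair of nonnegative random variables admitting a (ρ,H)-local dependence measure g, and let X be a nonnegative random variable independent of (A,B) that is an IED^ρ_H(λ)-random variable for some λ ∈ [0,∞). If g(0+) = g(0) or λ > 0, then AX+B is an IED^ρ_H(φ_ρ(λ))-random variable, i.e. lim_{ε→0+} (-log P(AX+B < ε))/H(ε) = φ_ρ(λ). -/
open MeasureTheory ProbabilityTheory Filter Set Topology
open scoped ENNReal

/-- `-log p`, valued in `[0,∞]`, with the convention `-log 0 = ∞`. -/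
noncomputable def negLog (p : ℝ≥0∞) : ℝ≥0∞ :=
  if p = 0 then ⊤ else ENNReal.ofReal (-Real.log p.toReal)

/-- `H` is positive, continuous and strictly decreasing on `(0,∞)`, and regularly
varying at `0` with index `-ρ < 0`. -/
structure IsRVatZero (H : ℝ → ℝ) (ρ : ℝ) : Prop where
  rho_pos : 0 < ρ
  pos : ∀ x ∈ Set.Ioi (0:ℝ), 0 < H x
  contOn : ContinuousOn H (Set.Ioi 0)
  anti : StrictAntiOn H (Set.Ioi 0)
  rv : ∀ y ∈ Set.Ioi (0:ℝ),
    Filter.Tendsto (fun x => H (y * x) / H x) (nhdsWithin 0 (Set.Ioi 0)) (nhds (y ^ (-ρ)))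

/-- `X` is an `IED^ρ_H(l)`-random variable with respect to `μ`:
`lim_{ε→0⁺} (-log P(X < ε))/H(ε) = l`. -/
def IsIED {Ω : Type*} [MeasurableSpace Ω] (μ : Measure Ω) (X : Ω → ℝ)
    (H : ℝ → ℝ) (l : ℝ≥0∞) : Prop :=
  Filter.Tendsto (fun ε => negLog (μ {ω | X ω < ε}) / ENNReal.ofReal (H ε))
    (nhdsWithin 0 (Set.Ioi 0)) (nhds l)

/-- `g` is the `(ρ,H)`-local dependence measure of the pair `(A,B)`:
`g(y) = lim_{ε→0⁺} (-log P(εAy + B < ε))/H(ε)` for every `y ≥ 0`. -/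
def IsLDM {Ω : Type*} [MeasurableSpace Ω] (μ : Measure Ω) (A B : Ω → ℝ)
    (H : ℝ → ℝ) (g : ℝ → ℝ≥0∞) : Prop :=
  ∀ y : ℝ, 0 ≤ y →
    Filter.Tendsto (fun ε => negLog (μ {ω | ε * A ω * y + B ω < ε}) / ENNReal.ofReal (H ε))
      (nhdsWithin 0 (Set.Ioi 0)) (nhds (g y))

/-- The Legendre-type transform `φ_ρ(λ) = inf_{y>0} { g(y) + λ/y^ρ }`. -/
noncomputable def phi (g : ℝ → ℝ≥0∞) (ρ : ℝ) (l : ℝ≥0∞) : ℝ≥0∞ :=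
  ⨅ y ∈ Set.Ioi (0:ℝ), (g y + l / ENNReal.ofReal (y ^ ρ))

/-- `λ* = inf_{y>1} { (y^ρ/(y^ρ-1)) g(y) }`. -/
noncomputable def lambdaStar (g : ℝ → ℝ≥0∞) (ρ : ℝ) : ℝ≥0∞ :=
  ⨅ y ∈ Set.Ioi (1:ℝ), ENNReal.ofReal (y ^ ρ / (y ^ ρ - 1)) * g y

lemma negLog_zero : negLog 0 = ⊤ := by simp [negLog]

lemma negLog_of_ne {p : ℝ≥0∞} (hp : p ≠ 0) :
    negLog p = ENNReal.ofReal (-Real.log p.toReal) := by simp [negLog, hp]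

lemma negLog_anti {p q : ℝ≥0∞} (h : p ≤ q) : negLog q ≤ negLog p := by
  rcases eq_or_ne p 0 with rfl | hp
  · simp [negLog_zero]
  rcases eq_or_ne q ⊤ with rfl | hq
  · rw [negLog_of_ne (by simp)]
    simp [Real.log_zero]
  rw [negLog_of_ne hp, negLog_of_ne (fun h0 => hp (le_antisymm (h0 ▸ h) zero_le))]
  apply ENNReal.ofReal_le_ofReal
  have hpt' : p ≠ ⊤ := (lt_of_le_of_lt h (lt_top_iff_ne_top.2 hq)).ne
  have hpt : 0 < p.toReal := ENNReal.toReal_pos hp hpt'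
  have := Real.log_le_log hpt ((ENNReal.toReal_le_toReal hpt' hq).2 h)
  linarith

lemma negLog_mul {p q : ℝ≥0∞} (hp : p ≤ 1) (hq : q ≤ 1) :
    negLog (p * q) = negLog p + negLog q := by
  rcases eq_or_ne p 0 with rfl | hp0
  · simp [negLog_zero]
  rcases eq_or_ne q 0 with rfl | hq0
  · simp [negLog_zero]
  have hpt : p ≠ ⊤ := (hp.trans_lt (by norm_num)).ne
  have hqt : q ≠ ⊤ := (hq.trans_lt (by norm_num)).ne
  have hp1 : 0 < p.toReal := ENNReal.toReal_pos hp0 hpt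
  have hq1 : 0 < q.toReal := ENNReal.toReal_pos hq0 hqt
  rw [negLog_of_ne (mul_ne_zero hp0 hq0), negLog_of_ne hp0, negLog_of_ne hq0,
    ENNReal.toReal_mul, Real.log_mul hp1.ne' hq1.ne', neg_add,
    ENNReal.ofReal_add]
  · simp only [neg_nonneg]
    exact Real.log_nonpos hp1.le (by simpa using (ENNReal.toReal_le_toReal hpt (by norm_num)).2 hp)
  · simp only [neg_nonneg]
    exact Real.log_nonpos hq1.le (by simpa using (ENNReal.toReal_le_toReal hqt (by norm_num)).2 hq)

lemma negLog_ofReal {t : ℝ} (ht : 0 < t) :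
    negLog (ENNReal.ofReal t) = ENNReal.ofReal (-Real.log t) := by
  rw [negLog_of_ne (by simpa using ht), ENNReal.toReal_ofReal ht.le]

/-- If `ofReal c ≤ negLog p` with `c ≥ 0` and `p ≤ 1`, then `p ≤ exp (-c)`. -/
lemma le_exp_of_negLog_ge {p : ℝ≥0∞} {c : ℝ} (hc : 0 ≤ c) (hp : p ≤ 1)
    (h : ENNReal.ofReal c ≤ negLog p) : p ≤ ENNReal.ofReal (Real.exp (-c)) := by
  rcases eq_or_ne p 0 with rfl | hp0
  · exact zero_le
  have hpt : p ≠ ⊤ := (hp.trans_lt (by norm_num)).ne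
  have hp1 : 0 < p.toReal := ENNReal.toReal_pos hp0 hpt
  rw [negLog_of_ne hp0] at h
  have hlog : 0 ≤ -Real.log p.toReal := by
    simp only [neg_nonneg]
    exact Real.log_nonpos hp1.le (by simpa using (ENNReal.toReal_le_toReal hpt (by norm_num)).2 hp)
  have h2 : c ≤ -Real.log p.toReal := (ENNReal.ofReal_le_ofReal_iff hlog).1 h
  have h3 : Real.log p.toReal ≤ -c := by linarith
  have h4 : p.toReal ≤ Real.exp (-c) := (Real.log_le_iff_le_exp hp1).1 h3
  calc p = ENNReal.ofReal p.toReal := (ENNReal.ofReal_toReal hpt).symm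
    _ ≤ _ := ENNReal.ofReal_le_ofReal h4
lemma IsRVatZero.tendsto_H_atTop {H : ℝ → ℝ} {ρ : ℝ} (hH : IsRVatZero H ρ) :
    Tendsto H (nhdsWithin 0 (Set.Ioi 0)) atTop := by
  set r : ℝ := (2⁻¹ : ℝ) ^ (-ρ) with hr
  have hr1 : 1 < r := by
    rw [hr, Real.one_lt_rpow_iff_of_pos (by norm_num)]
    right
    constructor
    · norm_num
    · linarith [hH.rho_pos]
  set r' : ℝ := (1 + r) / 2 with hr'
  have hr'1 : 1 < r' := by rw [hr']; linarith
  have hr'r : r' < r := by rw [hr']; linarith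
  have hev : ∀ᶠ x in nhdsWithin 0 (Set.Ioi 0), r' < H (2⁻¹ * x) / H x :=
    (hH.rv 2⁻¹ (by norm_num)).eventually (Ioi_mem_nhds hr'r)
  rw [eventually_nhdsWithin_iff, Metric.eventually_nhds_iff] at hev
  obtain ⟨ε, hε, hball⟩ := hev
  set δ : ℝ := ε / 2 with hδ
  have hδ0 : 0 < δ := by positivity
  have key : ∀ x : ℝ, 0 < x → x ≤ δ → r' * H x ≤ H (2⁻¹ * x) := by
    intro x hx hxδ
    have hxball : dist x (0:ℝ) < ε := by
      rw [Real.dist_eq, sub_zero, abs_of_pos hx]; linarith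
    have := hball hxball hx
    have hHx : 0 < H x := hH.pos x hx
    rw [lt_div_iff₀ hHx] at this
    linarith
  -- induction: H (δ / 2^n) ≥ r'^n * H δ
  have ind : ∀ n : ℕ, r' ^ n * H δ ≤ H (δ / 2 ^ n) := by
    intro n
    induction n with
    | zero => simp
    | succ n ih =>
      have hpos : 0 < δ / 2 ^ n := by positivity
      have hle : δ / 2 ^ n ≤ δ := by
        apply div_le_self hδ0.le
        exact one_le_pow₀ (by norm_num)
      have h1 := key _ hpos hle
      have h2 : (2⁻¹ : ℝ) * (δ / 2 ^ n) = δ / 2 ^ (n + 1) := by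
        rw [pow_succ]; ring
      rw [h2] at h1
      calc r' ^ (n+1) * H δ = r' * (r' ^ n * H δ) := by ring
        _ ≤ r' * H (δ / 2 ^ n) := by
            apply mul_le_mul_of_nonneg_left ih (by linarith)
        _ ≤ H (δ / 2 ^ (n+1)) := h1
  refine Filter.tendsto_atTop.mpr fun b => ?_
  have hHδ : 0 < H δ := hH.pos δ hδ0
  have : Tendsto (fun n : ℕ => r' ^ n * H δ) atTop atTop :=
    (tendsto_pow_atTop_atTop_of_one_lt hr'1).atTop_mul_const hHδ
  obtain ⟨n, hn⟩ := (Filter.tendsto_atTop.1 this b).exists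
  filter_upwards [Ioc_mem_nhdsGT_of_mem (Set.left_mem_Ico.2 (by positivity : (0:ℝ) < δ / 2 ^ n))] with x hx
  have hx0 : 0 < x := hx.1
  have hxle : x ≤ δ / 2 ^ n := hx.2
  have : H (δ / 2 ^ n) ≤ H x :=
    hH.anti.antitoneOn (Set.mem_Ioi.2 hx0) (Set.mem_Ioi.2 (by positivity)) hxle
  linarith [ind n]
lemma mul_self_tendsto {c : ℝ} (hc : 0 < c) :
    Tendsto (fun ε : ℝ => c * ε) (nhdsWithin 0 (Set.Ioi 0)) (nhdsWithin 0 (Set.Ioi 0)) := by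
  rw [tendsto_nhdsWithin_iff]
  constructor
  · have : Tendsto (fun ε : ℝ => c * ε) (nhds 0) (nhds (c * 0)) :=
      (continuous_const.mul continuous_id).tendsto 0
    simpa using this.mono_left nhdsWithin_le_nhds
  · filter_upwards [self_mem_nhdsWithin] with x hx
    exact mul_pos hc hx

lemma IED_scaled {Ω : Type*} [MeasurableSpace Ω] {μ : Measure Ω} {X : Ω → ℝ}
    {H : ℝ → ℝ} {ρ : ℝ} (hH : IsRVatZero H ρ) {l : ℝ≥0∞}
    (hXIED : IsIED μ X H l) (hl : l ≠ ⊤) {c : ℝ} (hc : 0 < c) :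
    Tendsto (fun ε => negLog (μ {ω | X ω < c * ε}) / ENNReal.ofReal (H ε))
      (nhdsWithin 0 (Set.Ioi 0)) (nhds (l / ENNReal.ofReal (c ^ ρ))) := by
  have h1 : Tendsto (fun ε => negLog (μ {ω | X ω < c * ε}) / ENNReal.ofReal (H (c * ε)))
      (nhdsWithin 0 (Set.Ioi 0)) (nhds l) := hXIED.comp (mul_self_tendsto hc)
  have h2 : Tendsto (fun ε => ENNReal.ofReal (H (c * ε)) / ENNReal.ofReal (H ε))
      (nhdsWithin 0 (Set.Ioi 0)) (nhds (ENNReal.ofReal (c ^ (-ρ)))) := by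
    have := ENNReal.tendsto_ofReal (hH.rv c (Set.mem_Ioi.2 hc))
    refine this.congr' ?_
    filter_upwards [self_mem_nhdsWithin] with x hx
    exact ENNReal.ofReal_div_of_pos (hH.pos x hx)
  have hmul := ENNReal.Tendsto.mul h1 (Or.inr ENNReal.ofReal_ne_top) h2 (Or.inr hl)
  have heq : l * ENNReal.ofReal (c ^ (-ρ)) = l / ENNReal.ofReal (c ^ ρ) := by
    rw [Real.rpow_neg hc.le, ENNReal.ofReal_inv_of_pos (Real.rpow_pos_of_pos hc ρ),
      div_eq_mul_inv]
  rw [heq] at hmul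
  refine hmul.congr' ?_
  filter_upwards [self_mem_nhdsWithin] with x hx
  have hd0 : ENNReal.ofReal (H (c * x)) ≠ 0 := by
    simp only [ne_eq, ENNReal.ofReal_eq_zero, not_le]
    exact hH.pos _ (mul_pos hc hx)
  rw [div_eq_mul_inv, div_eq_mul_inv, div_eq_mul_inv, mul_assoc,
    ← mul_assoc (ENNReal.ofReal (H (c * x)))⁻¹, ENNReal.inv_mul_cancel hd0 ENNReal.ofReal_ne_top,
    one_mul]
lemma exists_index : ∀ n : ℕ, ∀ z : ℕ → ℝ, (∀ i, 1 ≤ i → i < n → z i ≤ z (i+1)) →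
    ∀ x : ℝ, 1 ≤ n → z 1 ≤ x → x < z n → ∃ i, 1 ≤ i ∧ i < n ∧ z i ≤ x ∧ x < z (i+1) := by
  intro n
  induction n with
  | zero => intro z _ x h; omega
  | succ m ih =>
    intro z hmono x _ h1 hn
    rcases Nat.eq_zero_or_pos m with rfl | hm
    · exact absurd (h1.trans_lt hn) (lt_irrefl _)
    by_cases hx : x < z m
    · obtain ⟨i, hi1, hi2, hi3, hi4⟩ := ih z (fun i h1 h2 => hmono i h1 (by omega)) x hm h1 hx
      exact ⟨i, hi1, by omega, hi3, hi4⟩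
    · exact ⟨m, hm, by omega, not_lt.1 hx, hn⟩
lemma lower_aux {Ω : Type*} [MeasurableSpace Ω] (μ : Measure Ω) [IsProbabilityMeasure μ]
    (H : ℝ → ℝ) (ρ : ℝ) (hH : IsRVatZero H ρ)
    (A B X : Ω → ℝ)
    (hA0 : ∀ᵐ ω ∂μ, 0 ≤ A ω) (hX0 : ∀ᵐ ω ∂μ, 0 ≤ X ω)
    (g : ℝ → ℝ≥0∞) (hg : IsLDM μ A B H g)
    (l : ℝ≥0∞) (hl : l ≠ ⊤) (hXIED : IsIED μ X H l)
    (hindep : IndepFun X (fun ω => (A ω, B ω)) μ)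
    (M : ℝ≥0∞) (hM : M ≠ ⊤) (n : ℕ) (hn : 1 ≤ n) (z : ℕ → ℝ)
    (hzpos : ∀ i, 1 ≤ i → i ≤ n → 0 < z i)
    (hzmono : ∀ i, 1 ≤ i → i < n → z i ≤ z (i+1))
    (h0 : M < l / ENNReal.ofReal (z 1 ^ ρ) + g 0)
    (hmid : ∀ i, 1 ≤ i → i < n → M < l / ENNReal.ofReal (z (i+1) ^ ρ) + g (z i))
    (hlast : M < g (z n)) :
    ∀ᶠ ε in nhdsWithin (0:ℝ) (Set.Ioi 0),
      M < negLog (μ {ω | A ω * X ω + B ω < ε}) / ENNReal.ofReal (H ε) := by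
  classical
  set w : ℕ → ℝ := fun i => if i = 0 then 0 else z i with hw
  have hw0 : ∀ i, i < n → 0 ≤ w i := by
    intro i hi
    by_cases h : i = 0
    · simp [hw, h]
    · simp only [hw, if_neg h]
      exact (hzpos i (Nat.one_le_iff_ne_zero.2 h) (by omega)).le
  set T : ℕ → ℝ → Set Ω := fun i ε =>
    if i = n then {ω | ε * A ω * z n + B ω < ε}
    else {ω | X ω < z (i+1) * ε} ∩ {ω | ε * A ω * w i + B ω < ε} with hT
  set c : ℕ → ℝ≥0∞ := fun i =>
    if i = n then g (z n) else l / ENNReal.ofReal (z (i+1) ^ ρ) + g (w i) with hc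
  have htend : ∀ i ∈ Finset.range (n+1),
      Filter.Tendsto (fun ε => negLog (μ (T i ε)) / ENNReal.ofReal (H ε))
        (nhdsWithin (0:ℝ) (Set.Ioi 0)) (nhds (c i)) := by
    intro i hi
    by_cases hin : i = n
    · subst hin
      simp only [hT, hc, if_pos rfl]
      exact hg (z i) (hzpos i hn le_rfl).le
    · have hi' : i < n := by
        have := Finset.mem_range.1 hi; omega
      simp only [hT, hc, if_neg hin]
      have hzi1 : 0 < z (i+1) := hzpos (i+1) (by omega) (by omega)
      have hmul : ∀ ε : ℝ, μ ({ω | X ω < z (i+1) * ε} ∩ {ω | ε * A ω * w i + B ω < ε})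
          = μ {ω | X ω < z (i+1) * ε} * μ {ω | ε * A ω * w i + B ω < ε} := by
        intro ε
        exact hindep.measure_inter_preimage_eq_mul (Set.Iio (z (i+1) * ε))
          {p : ℝ × ℝ | ε * p.1 * w i + p.2 < ε} measurableSet_Iio
          (measurableSet_lt (((measurable_fst.const_mul ε).mul_const (w i)).add
            measurable_snd) measurable_const)
      have hsum := Filter.Tendsto.add (IED_scaled hH hXIED hl hzi1) (hg (w i) (hw0 i hi'))
      refine hsum.congr fun ε => ?_
      rw [hmul ε, negLog_mul prob_le_one prob_le_one, ← ENNReal.div_add_div_same]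
  have hMc : ∀ i ∈ Finset.range (n+1), M < c i := by
    intro i hi
    by_cases hin : i = n
    · subst hin; simpa only [hc, if_pos rfl] using hlast
    · have hi' : i < n := by
        have := Finset.mem_range.1 hi; omega
      simp only [hc, if_neg hin]
      by_cases h0' : i = 0
      · subst h0'
        have : w 0 = 0 := by simp [hw]
        rw [this]
        calc M < l / ENNReal.ofReal (z 1 ^ ρ) + g 0 := h0
          _ = _ := by norm_num
      · have h1i : 1 ≤ i := Nat.one_le_iff_ne_zero.2 h0'
        have : w i = z i := by simp [hw, h0']
        rw [this]
        exact hmid i h1i hi'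
  have hne : (Finset.range (n+1)).Nonempty := ⟨0, by simp⟩
  have hMcmin : M < (Finset.range (n+1)).inf' hne c := (Finset.lt_inf'_iff hne).2 hMc
  obtain ⟨M', hMM', hM'inf⟩ := exists_between hMcmin
  have hM'top : M' ≠ ⊤ := (lt_of_lt_of_le hM'inf le_top).ne
  have hM'c : ∀ i ∈ Finset.range (n+1), M' < c i :=
    fun i hi => lt_of_lt_of_le hM'inf (Finset.inf'_le _ hi)
  set d : ℝ := M'.toReal - M.toReal with hd
  have hd0 : 0 < d := by
    rw [hd]
    have := (ENNReal.toReal_lt_toReal hM hM'top).2 hMM'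
    linarith
  set K : ℝ := max 1 (Real.log ((n:ℝ)+1) / d + 1) with hKdef
  have hevAll : ∀ᶠ ε in nhdsWithin (0:ℝ) (Set.Ioi 0),
      ∀ i ∈ Finset.range (n+1), M' < negLog (μ (T i ε)) / ENNReal.ofReal (H ε) :=
    (eventually_all_finset _).2 fun i hi =>
      (htend i hi).eventually_mem (Ioi_mem_nhds (hM'c i hi))
  have hevH : ∀ᶠ ε in nhdsWithin (0:ℝ) (Set.Ioi 0), K ≤ H ε :=
    hH.tendsto_H_atTop.eventually (Filter.eventually_ge_atTop K)
  filter_upwards [hevAll, hevH, self_mem_nhdsWithin] with ε hev hK hε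
  have hε0 : (0:ℝ) < ε := hε
  have hH1 : (1:ℝ) ≤ H ε := le_trans (le_max_left _ _) hK
  have hH0 : (0:ℝ) < H ε := lt_of_lt_of_le one_pos hH1
  have hbne : ENNReal.ofReal (H ε) ≠ 0 := by
    simp only [ne_eq, ENNReal.ofReal_eq_zero, not_le]; exact hH0
  set a : ℝ := M'.toReal * H ε with ha
  have ha0 : 0 ≤ a := mul_nonneg ENNReal.toReal_nonneg hH0.le
  have hTsmall : ∀ i ∈ Finset.range (n+1), μ (T i ε) ≤ ENNReal.ofReal (Real.exp (-a)) := by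
    intro i hi
    have h2 : M' * ENNReal.ofReal (H ε) < negLog (μ (T i ε)) :=
      (ENNReal.lt_div_iff_mul_lt (Or.inl hbne) (Or.inl ENNReal.ofReal_ne_top)).1 (hev i hi)
    have h3 : ENNReal.ofReal a ≤ negLog (μ (T i ε)) := by
      rw [ha, ENNReal.ofReal_mul ENNReal.toReal_nonneg, ENNReal.ofReal_toReal hM'top]
      exact h2.le
    exact le_exp_of_negLog_ge ha0 prob_le_one h3
  have hcover : μ {ω | A ω * X ω + B ω < ε} ≤ μ (⋃ i ∈ Finset.range (n+1), T i ε) := by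
    refine measure_mono_ae ?_
    filter_upwards [hA0, hX0] with ω hAω hXω hmem
    have hωS : A ω * X ω + B ω < ε := hmem
    have hAX : (0:ℝ) ≤ A ω * X ω := mul_nonneg hAω hXω
    by_cases hx1 : X ω < z 1 * ε
    · refine Set.mem_biUnion (Finset.mem_range.2 (by omega : 0 < n+1)) ?_
      have h0n : (0:ℕ) ≠ n := by omega
      simp only [hT, if_neg h0n, Set.mem_inter_iff, Set.mem_setOf_eq]
      refine ⟨hx1, ?_⟩
      have hw0' : w 0 = 0 := by simp [hw]
      rw [hw0', mul_zero, zero_add]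
      linarith
    · by_cases hxn : X ω < z n * ε
      · obtain ⟨i, hi1, hi2, hi3, hi4⟩ := exists_index n (fun j => z j * ε)
          (fun j hj1 hj2 => mul_le_mul_of_nonneg_right (hzmono j hj1 hj2) hε0.le)
          (X ω) hn (not_lt.1 hx1) hxn
        refine Set.mem_biUnion (Finset.mem_range.2 (by omega : i < n + 1)) ?_
        simp only [hT, if_neg (by omega : i ≠ n), Set.mem_inter_iff, Set.mem_setOf_eq]
        refine ⟨hi4, ?_⟩
        have hwi : w i = z i := by simp [hw, Nat.one_le_iff_ne_zero.1 hi1]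
        rw [hwi]
        have hkey : ε * A ω * z i ≤ A ω * X ω := by
          calc ε * A ω * z i = A ω * (z i * ε) := by ring
            _ ≤ A ω * X ω := mul_le_mul_of_nonneg_left hi3 hAω
        linarith
      · refine Set.mem_biUnion (Finset.mem_range.2 (by omega : n < n+1)) ?_
        simp only [hT, if_pos rfl, Set.mem_setOf_eq]
        have hkey : ε * A ω * z n ≤ A ω * X ω := by
          calc ε * A ω * z n = A ω * (z n * ε) := by ring
            _ ≤ A ω * X ω := mul_le_mul_of_nonneg_left (not_lt.1 hxn) hAω
        linarith
  have hcast : ((n:ℝ≥0∞)+1) = ENNReal.ofReal ((n:ℝ)+1) := by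
    rw [ENNReal.ofReal_add (by positivity) (by norm_num), ENNReal.ofReal_natCast,
      ENNReal.ofReal_one]
  have hsum' : μ {ω | A ω * X ω + B ω < ε} ≤ ENNReal.ofReal (((n:ℝ)+1) * Real.exp (-a)) := by
    calc μ {ω | A ω * X ω + B ω < ε} ≤ μ (⋃ i ∈ Finset.range (n+1), T i ε) := hcover
      _ ≤ ∑ i ∈ Finset.range (n+1), μ (T i ε) := measure_biUnion_finset_le _ _
      _ ≤ ∑ _i ∈ Finset.range (n+1), ENNReal.ofReal (Real.exp (-a)) :=
          Finset.sum_le_sum hTsmall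
      _ = ((n:ℝ≥0∞)+1) * ENNReal.ofReal (Real.exp (-a)) := by
          rw [Finset.sum_const, Finset.card_range, nsmul_eq_mul]
          push_cast
          ring
      _ = ENNReal.ofReal (((n:ℝ)+1) * Real.exp (-a)) := by
          rw [ENNReal.ofReal_mul (by positivity), ← hcast]
  have hpos : (0:ℝ) < ((n:ℝ)+1) * Real.exp (-a) := by positivity
  have hnl : ENNReal.ofReal (a - Real.log ((n:ℝ)+1)) ≤ negLog (μ {ω | A ω * X ω + B ω < ε}) := by
    have h1 := negLog_anti hsum'
    rw [negLog_ofReal hpos] at h1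
    have h2 : -Real.log (((n:ℝ)+1) * Real.exp (-a)) = a - Real.log ((n:ℝ)+1) := by
      rw [Real.log_mul (by positivity) (Real.exp_ne_zero _), Real.log_exp]
      ring
    rwa [h2] at h1
  have hdivle := ENNReal.div_le_div_right hnl (ENNReal.ofReal (H ε))
  have heqdiv : ENNReal.ofReal (a - Real.log ((n:ℝ)+1)) / ENNReal.ofReal (H ε)
      = ENNReal.ofReal (M'.toReal - Real.log ((n:ℝ)+1) / H ε) := by
    rw [← ENNReal.ofReal_div_of_pos hH0]
    congr 1
    rw [ha, sub_div, mul_div_cancel_right₀ _ hH0.ne']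
  have hlog0 : (0:ℝ) ≤ Real.log ((n:ℝ)+1) := Real.log_nonneg (by
    have : (0:ℝ) ≤ (n:ℝ) := Nat.cast_nonneg n
    linarith)
  have hlogbound : Real.log ((n:ℝ)+1) / H ε < d := by
    rw [div_lt_iff₀ hH0]
    have h1 : Real.log ((n:ℝ)+1)/d + 1 ≤ H ε := le_trans (le_max_right _ _) hK
    have h2 : d * (Real.log ((n:ℝ)+1)/d + 1) = Real.log ((n:ℝ)+1) + d := by
      field_simp
    nlinarith
  have hfinal : M.toReal < M'.toReal - Real.log ((n:ℝ)+1) / H ε := by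
    have : M.toReal = M'.toReal - d := by rw [hd]; ring
    linarith
  have hval : M < ENNReal.ofReal (M'.toReal - Real.log ((n:ℝ)+1) / H ε) := by
    calc M = ENNReal.ofReal M.toReal := (ENNReal.ofReal_toReal hM).symm
      _ < _ := (ENNReal.ofReal_lt_ofReal_iff
          (lt_of_le_of_lt ENNReal.toReal_nonneg hfinal)).2 hfinal
  calc M < ENNReal.ofReal (M'.toReal - Real.log ((n:ℝ)+1) / H ε) := hval
    _ = ENNReal.ofReal (a - Real.log ((n:ℝ)+1)) / ENNReal.ofReal (H ε) := heqdiv.symm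
    _ ≤ _ := hdivle
lemma ldm_mono {Ω : Type*} [MeasurableSpace Ω] {μ : Measure Ω} [IsProbabilityMeasure μ]
    {A B : Ω → ℝ} {H : ℝ → ℝ} {ρ : ℝ} (hH : IsRVatZero H ρ)
    (hA0 : ∀ᵐ ω ∂μ, 0 ≤ A ω)
    {g : ℝ → ℝ≥0∞} (hg : IsLDM μ A B H g)
    {y₁ y₂ : ℝ} (h1 : 0 ≤ y₁) (h12 : y₁ ≤ y₂) : g y₁ ≤ g y₂ := by
  refine le_of_tendsto_of_tendsto (hg y₁ h1) (hg y₂ (h1.trans h12)) ?_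
  filter_upwards [self_mem_nhdsWithin] with ε (hε : (0:ℝ) < ε)
  have hmono : μ {ω | ε * A ω * y₂ + B ω < ε} ≤ μ {ω | ε * A ω * y₁ + B ω < ε} := by
    refine measure_mono_ae ?_
    filter_upwards [hA0] with ω hAω hmem
    have h2 : ε * A ω * y₂ + B ω < ε := hmem
    have : ε * A ω * y₁ ≤ ε * A ω * y₂ :=
      mul_le_mul_of_nonneg_left h12 (by positivity)
    show ε * A ω * y₁ + B ω < ε
    linarith
  exact ENNReal.div_le_div_right (negLog_anti hmono) _

/-- Theorem `thm:inverseDependencyPotentialMain`.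
If `(A,B)` has `(ρ,H)`-LDM `g`, and `X` is an independent nonnegative
`IED^ρ_H(λ)`-random variable with `λ ∈ [0,∞)`, and either `g(0⁺) = g(0)` or `λ > 0`,
then `AX+B` is an `IED^ρ_H(φ_ρ(λ))`-random variable. -/
theorem stmt0 {Ω : Type*} [MeasurableSpace Ω] (μ : Measure Ω) [IsProbabilityMeasure μ]
    (H : ℝ → ℝ) (ρ : ℝ) (hH : IsRVatZero H ρ)
    (A B X : Ω → ℝ) (hA : Measurable A) (hB : Measurable B) (hX : Measurable X)
    (hA0 : ∀ᵐ ω ∂μ, 0 ≤ A ω) (hB0 : ∀ᵐ ω ∂μ, 0 ≤ B ω) (hX0 : ∀ᵐ ω ∂μ, 0 ≤ X ω)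
    (g : ℝ → ℝ≥0∞) (hg : IsLDM μ A B H g)
    (l : ℝ≥0∞) (hl : l ≠ ⊤) (hXIED : IsIED μ X H l)
    (hindep : IndepFun X (fun ω => (A ω, B ω)) μ)
    (hcond : Filter.Tendsto g (nhdsWithin 0 (Set.Ioi 0)) (nhds (g 0)) ∨ 0 < l) :
    IsIED μ (fun ω => A ω * X ω + B ω) H (phi g ρ l) := by
  have hρ := hH.rho_pos
  set F : ℝ → ℝ≥0∞ :=
    fun ε => negLog (μ {ω | A ω * X ω + B ω < ε}) / ENNReal.ofReal (H ε) with hFdef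
  have hφle : ∀ y : ℝ, 0 < y → phi g ρ l ≤ g y + l / ENNReal.ofReal (y ^ ρ) := by
    intro y hy
    unfold phi
    exact iInf₂_le y hy
  have hupper : Filter.limsup F (nhdsWithin 0 (Set.Ioi 0)) ≤ phi g ρ l := by
    unfold phi
    refine le_iInf₂_iff.2 fun y hy => ?_
    have hy0 : (0:ℝ) < y := hy
    have htend := Filter.Tendsto.add (IED_scaled hH hXIED hl hy0) (hg y hy0.le)
    have hle : F ≤ᶠ[nhdsWithin (0:ℝ) (Set.Ioi 0)]
        fun ε => negLog (μ {ω | X ω < y * ε}) / ENNReal.ofReal (H ε)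
          + negLog (μ {ω | ε * A ω * y + B ω < ε}) / ENNReal.ofReal (H ε) := by
      filter_upwards [self_mem_nhdsWithin] with ε (hε : (0:ℝ) < ε)
      have hmeas : μ ({ω | X ω < y * ε} ∩ {ω | ε * A ω * y + B ω < ε})
          = μ {ω | X ω < y * ε} * μ {ω | ε * A ω * y + B ω < ε} :=
        hindep.measure_inter_preimage_eq_mul (Set.Iio (y * ε))
          {p : ℝ × ℝ | ε * p.1 * y + p.2 < ε} measurableSet_Iio
          (measurableSet_lt (((measurable_fst.const_mul ε).mul_const y).add
            measurable_snd) measurable_const)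
      have hincl : μ ({ω | X ω < y * ε} ∩ {ω | ε * A ω * y + B ω < ε})
          ≤ μ {ω | A ω * X ω + B ω < ε} := by
        refine measure_mono_ae ?_
        filter_upwards [hA0] with ω hAω hmem
        obtain ⟨h1, h2⟩ := hmem
        have h1' : X ω < y * ε := h1
        have h2' : ε * A ω * y + B ω < ε := h2
        have h3 : A ω * X ω ≤ ε * A ω * y := by
          calc A ω * X ω ≤ A ω * (y * ε) := mul_le_mul_of_nonneg_left h1'.le hAω
            _ = ε * A ω * y := by ring
        show A ω * X ω + B ω < ε
        linarith
      calc F ε ≤ negLog (μ ({ω | X ω < y * ε} ∩ {ω | ε * A ω * y + B ω < ε}))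
            / ENNReal.ofReal (H ε) := ENNReal.div_le_div_right (negLog_anti hincl) _
        _ = _ := by
            rw [hmeas, negLog_mul prob_le_one prob_le_one, ← ENNReal.div_add_div_same]
    calc Filter.limsup F (nhdsWithin 0 (Set.Ioi 0))
        ≤ Filter.limsup _ (nhdsWithin 0 (Set.Ioi 0)) := Filter.limsup_le_limsup hle
      _ = l / ENNReal.ofReal (y ^ ρ) + g y := htend.limsup_eq
      _ = g y + l / ENNReal.ofReal (y ^ ρ) := add_comm _ _
  have hlower : phi g ρ l ≤ Filter.liminf F (nhdsWithin 0 (Set.Ioi 0)) := by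
    refine le_of_forall_lt fun ν hνφ => ?_
    obtain ⟨ν', hνν', hν'φ⟩ := exists_between hνφ
    have hν'top : ν' ≠ ⊤ := hν'φ.ne_top
    suffices hev : ∀ᶠ ε in nhdsWithin (0:ℝ) (Set.Ioi 0), ν' < F ε by
      exact lt_of_lt_of_le hνν'
        (Filter.le_liminf_of_le (by isBoundedDefault) (hev.mono fun ε h => h.le))
    by_cases hl0 : l = 0
    · subst hl0
      have hg0 : ∀ z : ℝ, 0 < z → phi g ρ 0 ≤ g z := fun z hz => by
        simpa [ENNReal.zero_div] using hφle z hz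
      have hcnd : Filter.Tendsto g (nhdsWithin 0 (Set.Ioi 0)) (nhds (g 0)) :=
        hcond.resolve_right (by simp)
      have hg00 : phi g ρ 0 ≤ g 0 := ge_of_tendsto hcnd (by
        filter_upwards [self_mem_nhdsWithin] with t ht
        exact hg0 t ht)
      refine lower_aux μ H ρ hH A B X hA0 hX0 g hg 0 (by simp) hXIED hindep ν' hν'top
        1 le_rfl (fun _ => 1) (fun _ _ _ => one_pos) (fun i h1 h2 => absurd h2 (by omega))
        ?_ (fun i h1 h2 => absurd h2 (by omega)) ?_
      · simpa [ENNReal.zero_div] using lt_of_lt_of_le hν'φ hg00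
      · exact lt_of_lt_of_le hν'φ (hg0 1 one_pos)
    · have hlpos : 0 < l := pos_iff_ne_zero.2 hl0
      have hlt : 0 < l.toReal := ENNReal.toReal_pos hl0 hl
      obtain ⟨κ, hν'κ, hκφ⟩ := exists_between hν'φ
      have hκtop : κ ≠ ⊤ := hκφ.ne_top
      set Δ := κ - ν' with hΔdef
      have hΔ0 : 0 < Δ := tsub_pos_iff_lt.2 hν'κ
      have hΔtop : Δ ≠ ⊤ := (lt_of_le_of_lt tsub_le_self (lt_top_iff_ne_top.2 hκtop)).ne
      set ΔR := Δ.toReal with hΔRdef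
      have hΔR : 0 < ΔR := ENNReal.toReal_pos hΔ0.ne' hΔtop
      -- first cut point
      set b := l.toReal / (ν'.toReal + 1) with hbdef
      have hb0 : 0 < b := by positivity
      set z1 := b ^ ρ⁻¹ with hz1def
      have hz10 : 0 < z1 := Real.rpow_pos_of_pos hb0 _
      have hz1ρ : z1 ^ ρ = b := Real.rpow_inv_rpow hb0.le hρ.ne'
      have hν1 : ν' < l / ENNReal.ofReal b := by
        rw [ENNReal.lt_div_iff_mul_lt
          (Or.inl (by simp only [ne_eq, ENNReal.ofReal_eq_zero, not_le]; positivity))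
          (Or.inl ENNReal.ofReal_ne_top)]
        calc ν' * ENNReal.ofReal b = ENNReal.ofReal (ν'.toReal * b) := by
              rw [ENNReal.ofReal_mul ENNReal.toReal_nonneg, ENNReal.ofReal_toReal hν'top]
          _ < ENNReal.ofReal l.toReal := by
              rw [ENNReal.ofReal_lt_ofReal_iff hlt]
              have h1 : ν'.toReal * b = (ν'.toReal/(ν'.toReal+1)) * l.toReal := by
                rw [hbdef]; ring
              have h2 : ν'.toReal/(ν'.toReal+1) < 1 :=
                (div_lt_one (by positivity)).2 (by linarith [ENNReal.toReal_nonneg (a := ν')])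
              calc ν'.toReal * b = (ν'.toReal/(ν'.toReal+1)) * l.toReal := h1
                _ < 1 * l.toReal := mul_lt_mul_of_pos_right h2 hlt
                _ = l.toReal := one_mul _
          _ = l := ENNReal.ofReal_toReal hl
      -- tail cut point
      set u := l.toReal / ΔR + 1 with hudef
      have hu0 : 0 < u := by positivity
      set Z0 := u ^ ρ⁻¹ with hZ0def
      have hZ00 : 0 < Z0 := Real.rpow_pos_of_pos hu0 _
      have hZ0ρ : Z0 ^ ρ = u := Real.rpow_inv_rpow hu0.le hρ.ne'
      have hsmall : l / ENNReal.ofReal u < Δ := by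
        rw [ENNReal.div_lt_iff
          (Or.inl (by simp only [ne_eq, ENNReal.ofReal_eq_zero, not_le]; positivity))
          (Or.inl ENNReal.ofReal_ne_top)]
        calc l = ENNReal.ofReal l.toReal := (ENNReal.ofReal_toReal hl).symm
          _ < ENNReal.ofReal (ΔR * u) := by
              rw [ENNReal.ofReal_lt_ofReal_iff (by positivity)]
              have h1 : ΔR * u = l.toReal + ΔR := by rw [hudef]; field_simp
              linarith
          _ = Δ * ENNReal.ofReal u := by
              rw [ENNReal.ofReal_mul hΔR.le, ENNReal.ofReal_toReal hΔtop]
      have hgZ0 : ν' < g Z0 := by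
        by_contra hcon
        push_neg at hcon
        have h1 : phi g ρ l ≤ g Z0 + l / ENNReal.ofReal (Z0 ^ ρ) := hφle Z0 hZ00
        have h2 : g Z0 + l / ENNReal.ofReal (Z0 ^ ρ) < ν' + Δ := by
          rw [hZ0ρ]
          calc g Z0 + l / ENNReal.ofReal u ≤ ν' + l / ENNReal.ofReal u :=
                add_le_add_left hcon _
            _ < ν' + Δ := ENNReal.add_lt_add_left hν'top hsmall
        have h3 : ν' + Δ = κ := add_tsub_cancel_of_le hν'κ.le
        exact absurd (h1.trans_lt (h2.trans_eq h3)) (not_lt.2 hκφ.le)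
      set Z := max z1 Z0 with hZdef
      have hZ0 : 0 < Z := lt_of_lt_of_le hz10 (le_max_left _ _)
      have hgZ : ν' < g Z :=
        lt_of_lt_of_le hgZ0 (ldm_mono hH hA0 hg hZ00.le (le_max_right _ _))
      have hz1Z : z1 ≤ Z := le_max_left _ _
      -- partition of [z1, Z]
      set v1 := l.toReal / z1 ^ ρ with hv1def
      set V := l.toReal / Z ^ ρ with hVdef
      have hz1ρpos : 0 < z1 ^ ρ := Real.rpow_pos_of_pos hz10 _
      have hZρpos : 0 < Z ^ ρ := Real.rpow_pos_of_pos hZ0 _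
      have hVpos : 0 < V := by rw [hVdef]; positivity
      have hVv1 : V ≤ v1 :=
        div_le_div_of_nonneg_left hlt.le hz1ρpos (Real.rpow_le_rpow hz10.le hz1Z hρ.le)
      set m := ⌈(v1 - V)/ΔR⌉₊ + 1 with hmdef
      have hm1 : 1 ≤ m := by omega
      have hmpos : (0:ℝ) < (m:ℝ) := by positivity
      set s := (v1 - V)/(m:ℝ) with hsdef
      have hs0 : 0 ≤ s := div_nonneg (by linarith) (Nat.cast_nonneg m)
      have hms : (m:ℝ) * s = v1 - V := by rw [hsdef]; field_simp
      have hsΔ : s ≤ ΔR := by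
        rw [hsdef, div_le_iff₀ hmpos]
        have h1 : (v1 - V)/ΔR ≤ (⌈(v1-V)/ΔR⌉₊ : ℝ) := Nat.le_ceil _
        have h2 : v1 - V ≤ (⌈(v1-V)/ΔR⌉₊ : ℝ) * ΔR := (div_le_iff₀ hΔR).1 h1
        have h3 : ((m:ℝ)) = (⌈(v1-V)/ΔR⌉₊ : ℝ) + 1 := by rw [hmdef]; push_cast; ring
        nlinarith
      set n := m + 1 with hndef
      set vv : ℕ → ℝ := fun i => v1 - ((i:ℝ) - 1) * s with hvvdef
      have hvv1 : vv 1 = v1 := by simp [hvvdef]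
      have hvvn : vv n = V := by
        have h1 : ((n:ℝ) - 1) = (m:ℝ) := by rw [hndef]; push_cast; ring
        simp only [hvvdef]
        rw [h1, hms]
        ring
      have hvvV : ∀ i, 1 ≤ i → i ≤ n → V ≤ vv i := by
        intro i h1 h2
        have hc : i ≤ m + 1 := h2
        have hc' : ((i:ℝ)) - 1 ≤ (m:ℝ) := by
          have h4 : ((i:ℝ)) ≤ ((m:ℝ)) + 1 := by exact_mod_cast hc
          linarith
        have h3 : ((i:ℝ) - 1) * s ≤ (m:ℝ) * s := mul_le_mul_of_nonneg_right hc' hs0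
        simp only [hvvdef]
        linarith [hms]
      have hvvpos : ∀ i, 1 ≤ i → i ≤ n → 0 < vv i :=
        fun i h1 h2 => lt_of_lt_of_le hVpos (hvvV i h1 h2)
      have hvvstep : ∀ i : ℕ, vv i = vv (i+1) + s := by
        intro i
        simp only [hvvdef]
        push_cast
        ring
      set z : ℕ → ℝ := fun i => (l.toReal / vv i) ^ ρ⁻¹ with hzdef
      have hzpos : ∀ i, 1 ≤ i → i ≤ n → 0 < z i := by
        intro i h1 h2
        exact Real.rpow_pos_of_pos (div_pos hlt (hvvpos i h1 h2)) _
      have hzρ : ∀ i, 1 ≤ i → i ≤ n → z i ^ ρ = l.toReal / vv i := by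
        intro i h1 h2
        exact Real.rpow_inv_rpow (div_pos hlt (hvvpos i h1 h2)).le hρ.ne'
      have hkey : ∀ i, 1 ≤ i → i ≤ n → l / ENNReal.ofReal (z i ^ ρ) = ENNReal.ofReal (vv i) := by
        intro i h1 h2
        rw [hzρ i h1 h2]
        have hv := hvvpos i h1 h2
        have hden0 : ENNReal.ofReal (l.toReal / vv i) ≠ 0 := by
          simp only [ne_eq, ENNReal.ofReal_eq_zero, not_le]
          positivity
        have e1 : ENNReal.ofReal (vv i) * ENNReal.ofReal (l.toReal / vv i) = l := by
          rw [← ENNReal.ofReal_mul hv.le,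
            show vv i * (l.toReal / vv i) = l.toReal by field_simp,
            ENNReal.ofReal_toReal hl]
        nth_rewrite 1 [← e1]
        rw [mul_div_assoc, ENNReal.div_self hden0 ENNReal.ofReal_ne_top, mul_one]
      have hzmono : ∀ i, 1 ≤ i → i < n → z i ≤ z (i+1) := by
        intro i h1 h2
        refine Real.rpow_le_rpow (div_pos hlt (hvvpos i h1 h2.le)).le ?_ (inv_nonneg.2 hρ.le)
        refine div_le_div_of_nonneg_left hlt.le (hvvpos (i+1) (by omega) (by omega)) ?_
        rw [hvvstep i]
        linarith
      have hz1' : z 1 = z1 := by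
        have h1 : l.toReal / v1 = z1 ^ ρ := by
          rw [hv1def]
          field_simp
        simp only [hzdef]
        rw [hvv1, h1, Real.rpow_rpow_inv hz10.le hρ.ne']
      have hzn : z n = Z := by
        have h1 : l.toReal / V = Z ^ ρ := by
          rw [hVdef]
          field_simp
        simp only [hzdef]
        rw [hvvn, h1, Real.rpow_rpow_inv hZ0.le hρ.ne']
      refine lower_aux μ H ρ hH A B X hA0 hX0 g hg l hl hXIED hindep ν' hν'top
        n (by omega) z hzpos hzmono ?_ ?_ ?_
      · rw [hz1', hz1ρ]
        exact lt_of_lt_of_le hν1 le_self_add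
      · intro i h1 h2
        have hκlt : κ < g (z i) + ENNReal.ofReal (vv i) := by
          refine lt_of_lt_of_le hκφ ?_
          rw [← hkey i h1 (by omega)]
          exact hφle (z i) (hzpos i h1 (by omega))
        have hstep : ENNReal.ofReal (vv i) ≤ ENNReal.ofReal (vv (i+1)) + Δ := by
          rw [hvvstep i,
            ENNReal.ofReal_add (hvvpos (i+1) (by omega) (by omega)).le hs0]
          refine add_le_add_right ?_ _
          rw [← ENNReal.ofReal_toReal hΔtop]
          exact ENNReal.ofReal_le_ofReal hsΔ
        have hchain : ν' + Δ < (l / ENNReal.ofReal (z (i+1) ^ ρ) + g (z i)) + Δ := by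
          rw [hkey (i+1) (by omega) (by omega)]
          calc ν' + Δ = κ := add_tsub_cancel_of_le hν'κ.le
            _ < g (z i) + ENNReal.ofReal (vv i) := hκlt
            _ ≤ g (z i) + (ENNReal.ofReal (vv (i+1)) + Δ) := add_le_add_right hstep _
            _ = (ENNReal.ofReal (vv (i+1)) + g (z i)) + Δ := by ring
        exact (ENNReal.add_lt_add_iff_right hΔtop).1 hchain
      · rw [hzn]; exact hgZ
  exact tendsto_of_le_liminf_of_limsup_le hlower hupper
end

section
/- Let g:[0,∞)→[0,∞] be a nondecreasing function, ρ > 0, φ_ρ(λ) = inf_{y>0} { g(y) + λ/y^ρ }, and λ* = inf_{y>1} { (y^ρ/(y^ρ-1)) g(y) }. Suppose φ_ρ(0) > 0 and λ* < ∞. Then for any λ_1 ∈ [0,λ*], the sequence defined by λ_n = φ_ρ(λ_{n-1}) for n ≥ 2 is nondecreasing and converges to λ*. -/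
open MeasureTheory ProbabilityTheory Filter Set Topology
open scoped ENNReal

private lemma stmt6_ofReal_split (t : ℝ) (ht : 1 < t) :
    ENNReal.ofReal ((t-1)/t) + ENNReal.ofReal t⁻¹ = 1 := by
  rw [← ENNReal.ofReal_add (div_nonneg (by linarith) (by linarith)) (by positivity)]
  have : (t-1)/t + t⁻¹ = 1 := by field_simp; ring
  rw [this, ENNReal.ofReal_one]

private lemma stmt6_ofReal_prod (t : ℝ) (ht : 1 < t) :
    ENNReal.ofReal (t/(t-1)) * ENNReal.ofReal ((t-1)/t) = 1 := by
  rw [← ENNReal.ofReal_mul (div_nonneg (by linarith) (by linarith))]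
  have : t/(t-1) * ((t-1)/t) = 1 := by
    rw [div_mul_div_comm, mul_comm t (t-1)]
    exact div_self (by nlinarith)
  rw [this, ENNReal.ofReal_one]

private lemma stmt6_key_real (c' ls' L' lam' a s : ℝ)
    (hc' : 0 < c') (hls' : 0 < ls') (hL' : L' < ls')
    (hlam0 : 0 ≤ lam') (hlamL : lam' ≤ L')
    (hs0 : 0 < s) (hs1 : s < 1)
    (hca : c' ≤ a) (hga : ls' * (1 - s) ≤ a) :
    lam' + min (c'/2) ((ls' - L') * c' / (2*ls')) ≤ a + lam' * s := by
  rcases le_or_gt (c'/(2*ls')) (1-s) with h | h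
  · have h1 : (ls' - L') * (c'/(2*ls')) ≤ (ls' - lam') * (1 - s) :=
      mul_le_mul (by linarith) h (by positivity) (by linarith)
    have h2 : min (c'/2) ((ls' - L') * c' / (2*ls')) ≤ (ls' - L') * c' / (2*ls') :=
      min_le_right _ _
    have h3 : (ls' - L') * c' / (2*ls') = (ls' - L') * (c'/(2*ls')) := by ring
    nlinarith
  · have h1 : lam' * (1-s) ≤ ls' * (1-s) :=
      mul_le_mul_of_nonneg_right (by linarith) (by linarith)
    have h2 : ls' * (1-s) ≤ ls' * (c'/(2*ls')) :=
      mul_le_mul_of_nonneg_left h.le hls'.le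
    have h3 : ls' * (c'/(2*ls')) = c'/2 := by field_simp
    have h4 : min (c'/2) ((ls' - L') * c' / (2*ls')) ≤ c'/2 := min_le_left _ _
    nlinarith

/-- Proposition `pro:newConv`.
Suppose `g : [0,∞) → [0,∞]` is nondecreasing, `ρ > 0`, `φ_ρ(0) > 0` and `λ* < ∞`.
If `λ₁ ∈ [0,λ*]` and `λ_{n+1} = φ_ρ(λ_n)` for `n ≥ 1`, then the sequence `(λ_n)_{n≥1}`
is nondecreasing and converges to `λ*`. -/
theorem stmt6 (g : ℝ → ℝ≥0∞) (ρ : ℝ) (hρ : 0 < ρ) (hmono : MonotoneOn g (Set.Ici 0))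
    (hphi0 : 0 < phi g ρ 0) (hls : lambdaStar g ρ ≠ ⊤)
    (lam : ℕ → ℝ≥0∞) (hlam1 : lam 1 ≤ lambdaStar g ρ)
    (hrec : ∀ n : ℕ, 1 ≤ n → lam (n+1) = phi g ρ (lam n)) :
    (∀ n : ℕ, 1 ≤ n → lam n ≤ lam (n+1))
    ∧ Filter.Tendsto lam Filter.atTop (nhds (lambdaStar g ρ)) := by
  set ls := lambdaStar g ρ with hls_def
  -- basic facts about y ^ ρ
  have hpow_pos : ∀ y : ℝ, 0 < y → 0 < y ^ ρ := fun y hy => Real.rpow_pos_of_pos hy ρ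
  have hpow_gt : ∀ y : ℝ, 1 < y → 1 < y ^ ρ := fun y hy =>
    Real.one_lt_rpow_iff_of_pos (by linarith) |>.2 (Or.inl ⟨hy, hρ⟩)
  have hG0 : ∀ y : ℝ, 0 < y → ENNReal.ofReal (y ^ ρ) ≠ 0 := fun y hy =>
    (ENNReal.ofReal_pos.2 (hpow_pos y hy)).ne'
  -- c := phi g ρ 0 is a lower bound of g on (0,∞)
  set c := phi g ρ 0 with hc_def
  have hcle : ∀ y : ℝ, 0 < y → c ≤ g y := by
    intro y hy
    have h := iInf₂_le (f := fun y (_ : y ∈ Set.Ioi (0:ℝ)) =>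
      g y + (0:ℝ≥0∞) / ENNReal.ofReal (y ^ ρ)) y hy
    simpa [phi, hc_def] using h
  -- lower bound of g on (1,∞) coming from λ*
  have hgB : ∀ y : ℝ, 1 < y → ls * ENNReal.ofReal ((y ^ ρ - 1)/(y ^ ρ)) ≤ g y := by
    intro y hy
    have h1 : ls ≤ ENNReal.ofReal (y ^ ρ / (y ^ ρ - 1)) * g y := by
      have h := iInf₂_le (f := fun y (_ : y ∈ Set.Ioi (1:ℝ)) =>
        ENNReal.ofReal (y ^ ρ / (y ^ ρ - 1)) * g y) y hy
      simpa [lambdaStar, hls_def] using h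
    calc ls * ENNReal.ofReal ((y ^ ρ - 1)/(y ^ ρ))
        ≤ (ENNReal.ofReal (y ^ ρ / (y ^ ρ - 1)) * g y) * ENNReal.ofReal ((y ^ ρ - 1)/(y ^ ρ)) :=
          mul_le_mul_left h1 _
      _ = (ENNReal.ofReal (y ^ ρ / (y ^ ρ - 1)) * ENNReal.ofReal ((y ^ ρ - 1)/(y ^ ρ))) * g y := by
          ring
      _ = g y := by rw [stmt6_ofReal_prod _ (hpow_gt y hy), one_mul]
  -- c ≤ λ*
  have hcls : c ≤ ls := by
    rw [hls_def, lambdaStar]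
    refine le_iInf₂ fun y hy => ?_
    have hy1 : (1:ℝ) < y := hy
    have h1 : (1:ℝ≥0∞) ≤ ENNReal.ofReal (y ^ ρ / (y ^ ρ - 1)) := by
      rw [← ENNReal.ofReal_one]
      refine ENNReal.ofReal_le_ofReal ?_
      have ht := hpow_gt y hy1
      rw [le_div_iff₀ (by linarith)]; linarith
    calc c ≤ g y := hcle y (lt_trans one_pos hy1)
      _ = 1 * g y := (one_mul _).symm
      _ ≤ ENNReal.ofReal (y ^ ρ / (y ^ ρ - 1)) * g y := mul_le_mul_left h1 _
  have hls_top : ls ≠ ⊤ := hls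
  have hc_top : c ≠ ⊤ := (lt_of_le_of_lt hcls hls_top.lt_top).ne
  have hls_pos : 0 < ls := lt_of_lt_of_le hphi0 hcls
  -- for y ≤ 1, division by ofReal (y^ρ) increases
  have hdivmono : ∀ (l : ℝ≥0∞) (y : ℝ), 0 < y → y ≤ 1 → l ≤ l / ENNReal.ofReal (y ^ ρ) := by
    intro l y hy hy1
    refine (ENNReal.le_div_iff_mul_le (Or.inl (hG0 y hy)) (Or.inl ENNReal.ofReal_ne_top)).2 ?_
    have h2 : ENNReal.ofReal (y ^ ρ) ≤ 1 := by
      rw [← ENNReal.ofReal_one]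
      exact ENNReal.ofReal_le_ofReal (Real.rpow_le_one hy.le hy1 hρ.le)
    calc l * ENNReal.ofReal (y ^ ρ) ≤ l * 1 := mul_le_mul_right h2 l
      _ = l := mul_one l
  -- division rewritten as multiplication
  have hdiv_eq : ∀ (l : ℝ≥0∞) (y : ℝ), 0 < y →
      l / ENNReal.ofReal (y ^ ρ) = l * ENNReal.ofReal ((y ^ ρ)⁻¹) := by
    intro l y hy
    rw [div_eq_mul_inv, ENNReal.ofReal_inv_of_pos (hpow_pos y hy)]
  -- Claim A : l ≤ λ* → l ≤ φ(l)
  have hA : ∀ l : ℝ≥0∞, l ≤ ls → l ≤ phi g ρ l := by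
    intro l hl
    rw [phi]
    refine le_iInf₂ fun y hy => ?_
    have hy0 : (0:ℝ) < y := hy
    rcases le_or_gt y 1 with hy1 | hy1
    · exact le_trans (hdivmono l y hy0 hy1) le_add_self
    · have ht := hpow_gt y hy1
      calc l = l * (ENNReal.ofReal ((y ^ ρ - 1)/(y ^ ρ)) + ENNReal.ofReal ((y ^ ρ)⁻¹)) := by
            rw [stmt6_ofReal_split _ ht, mul_one]
        _ = l * ENNReal.ofReal ((y ^ ρ - 1)/(y ^ ρ)) + l * ENNReal.ofReal ((y ^ ρ)⁻¹) :=
            mul_add _ _ _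
        _ ≤ ls * ENNReal.ofReal ((y ^ ρ - 1)/(y ^ ρ)) + l * ENNReal.ofReal ((y ^ ρ)⁻¹) :=
            add_le_add_left (mul_le_mul_left hl _) _
        _ ≤ g y + l * ENNReal.ofReal ((y ^ ρ)⁻¹) := add_le_add_left (hgB y hy1) _
        _ = g y + l / ENNReal.ofReal (y ^ ρ) := by rw [hdiv_eq l y hy0]
  -- Claim B : φ(λ*) ≤ λ*
  have hB : phi g ρ ls ≤ ls := by
    refine ENNReal.le_of_forall_pos_le_add fun ε hε hlttop => ?_
    have hεne : (ε:ℝ≥0∞) ≠ 0 := by exact_mod_cast hε.ne'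
    have hlt : lambdaStar g ρ < ls + ε := by
      rw [← hls_def]
      exact ENNReal.lt_add_right hls_top hεne
    rw [lambdaStar] at hlt
    simp only [iInf_lt_iff] at hlt
    obtain ⟨y, hy, hy2⟩ := hlt
    have hy1 : (1:ℝ) < y := hy
    have hy0 : (0:ℝ) < y := lt_trans one_pos hy1
    have ht := hpow_gt y hy1
    have hgy : g y ≤ (ls + ε) * ENNReal.ofReal ((y ^ ρ - 1)/(y ^ ρ)) := by
      calc g y = (ENNReal.ofReal (y ^ ρ / (y ^ ρ - 1)) * ENNReal.ofReal ((y ^ ρ - 1)/(y ^ ρ))) * g y := by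
            rw [stmt6_ofReal_prod _ ht, one_mul]
        _ = (ENNReal.ofReal (y ^ ρ / (y ^ ρ - 1)) * g y) * ENNReal.ofReal ((y ^ ρ - 1)/(y ^ ρ)) := by
            ring
        _ ≤ (ls + ε) * ENNReal.ofReal ((y ^ ρ - 1)/(y ^ ρ)) := mul_le_mul_left hy2.le _
    calc phi g ρ ls ≤ g y + ls / ENNReal.ofReal (y ^ ρ) := by
          have h := iInf₂_le (f := fun y (_ : y ∈ Set.Ioi (0:ℝ)) =>
            g y + ls / ENNReal.ofReal (y ^ ρ)) y (Set.mem_Ioi.2 hy0)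
          simpa [phi] using h
      _ ≤ (ls + ε) * ENNReal.ofReal ((y ^ ρ - 1)/(y ^ ρ)) + (ls + ε) * ENNReal.ofReal ((y ^ ρ)⁻¹) := by
          rw [hdiv_eq ls y hy0]
          exact add_le_add hgy (mul_le_mul_left le_self_add _)
      _ = (ls + ε) * (ENNReal.ofReal ((y ^ ρ - 1)/(y ^ ρ)) + ENNReal.ofReal ((y ^ ρ)⁻¹)) :=
          (mul_add _ _ _).symm
      _ = ls + ε := by rw [stmt6_ofReal_split _ ht, mul_one]
  -- φ is monotone
  have hphimono : ∀ a b : ℝ≥0∞, a ≤ b → phi g ρ a ≤ phi g ρ b := by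
    intro a b hab
    exact iInf_mono fun y => iInf_mono fun hy =>
      add_le_add_right (ENNReal.div_le_div_right hab _) _
  -- λ_n ≤ λ*
  have hub : ∀ n : ℕ, 1 ≤ n → lam n ≤ ls := by
    intro n hn
    induction n, hn using Nat.le_induction with
    | base => exact hlam1
    | succ n hn ih => rw [hrec n hn]; exact le_trans (hphimono _ _ ih) hB
  -- the sequence is nondecreasing
  have hstep : ∀ n : ℕ, 1 ≤ n → lam n ≤ lam (n+1) := by
    intro n hn
    rw [hrec n hn]
    exact hA _ (hub n hn)
  have hmono2 : ∀ m n : ℕ, 1 ≤ m → m ≤ n → lam m ≤ lam n := by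
    intro m n h1 h2
    induction n, h2 using Nat.le_induction with
    | base => exact le_refl _
    | succ n hn ih => exact le_trans ih (hstep n (le_trans h1 hn))
  -- the supremum
  set L := ⨆ n : ℕ, lam (n+1) with hL_def
  have hLle : L ≤ ls := iSup_le fun n => hub (n+1) (by omega)
  have hL_top : L ≠ ⊤ := (lt_of_le_of_lt hLle hls_top.lt_top).ne
  have hLeq : L = ls := by
    by_contra hne
    have hlt : L < ls := lt_of_le_of_ne hLle hne
    set c' := c.toReal with hc'_def
    set ls' := ls.toReal with hls'_def
    set L' := L.toReal with hL'_def
    have hc'pos : 0 < c' := ENNReal.toReal_pos hphi0.ne' hc_top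
    have hls'pos : 0 < ls' := ENNReal.toReal_pos hls_pos.ne' hls_top
    have hL'lt : L' < ls' := by
      rw [hL'_def, hls'_def]
      exact (ENNReal.toReal_lt_toReal hL_top hls_top).2 hlt
    set δ := min (c'/2) ((ls' - L') * c' / (2*ls')) with hδ_def
    have hδpos : 0 < δ := lt_min (by positivity) (div_pos (mul_pos (by linarith) hc'pos) (by linarith))
    have hδc : δ ≤ c' := le_trans (min_le_left _ _) (by linarith)
    -- each step gains at least δ
    have hgain : ∀ n : ℕ, 1 ≤ n → lam n + ENNReal.ofReal δ ≤ lam (n+1) := by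
      intro n hn
      obtain ⟨m, rfl⟩ : ∃ m, n = m + 1 := ⟨n - 1, by omega⟩
      have hlamLe : lam (m+1) ≤ L := le_iSup (fun k => lam (k+1)) m
      have hlamTop : lam (m+1) ≠ ⊤ := (lt_of_le_of_lt hlamLe hL_top.lt_top).ne
      rw [hrec _ hn, phi]
      refine le_iInf₂ fun y hy => ?_
      have hy0 : (0:ℝ) < y := hy
      rcases le_or_gt y 1 with hy1 | hy1
      · have h1 : ENNReal.ofReal δ ≤ g y := by
          refine le_trans ?_ (hcle y hy0)
          calc ENNReal.ofReal δ ≤ ENNReal.ofReal c' := ENNReal.ofReal_le_ofReal hδc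
            _ = c := ENNReal.ofReal_toReal hc_top
        calc lam (m+1) + ENNReal.ofReal δ = ENNReal.ofReal δ + lam (m+1) := add_comm _ _
          _ ≤ g y + lam (m+1) / ENNReal.ofReal (y ^ ρ) :=
              add_le_add h1 (hdivmono _ y hy0 hy1)
      · by_cases hgtop : g y = ⊤
        · rw [hgtop, top_add]; exact le_top
        have ht := hpow_gt y hy1
        set lam' := (lam (m+1)).toReal with hlam'_def
        set a := (g y).toReal with ha_def
        have hlam'0 : 0 ≤ lam' := ENNReal.toReal_nonneg
        have hlamL' : lam' ≤ L' := ENNReal.toReal_mono hL_top hlamLe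
        have hca : c' ≤ a := ENNReal.toReal_mono hgtop (hcle y hy0)
        set s := (y ^ ρ)⁻¹ with hs_def
        have hs0 : 0 < s := by positivity
        have hs1 : s < 1 := by
          rw [hs_def, inv_lt_one_iff₀]; right; exact ht
        have hus : (y ^ ρ - 1)/(y ^ ρ) = 1 - s := by
          rw [hs_def]; field_simp
        have hga : ls' * (1 - s) ≤ a := by
          have h2 := hgB y hy1
          rw [hus] at h2
          have h3 := ENNReal.toReal_mono hgtop h2
          rwa [ENNReal.toReal_mul, ENNReal.toReal_ofReal (by linarith)] at h3
        have hkey := stmt6_key_real c' ls' L' lam' a s hc'pos hls'pos hL'lt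
          hlam'0 hlamL' hs0 hs1 hca hga
        calc lam (m+1) + ENNReal.ofReal δ = ENNReal.ofReal (lam' + δ) := by
              rw [ENNReal.ofReal_add hlam'0 hδpos.le, ENNReal.ofReal_toReal hlamTop]
          _ ≤ ENNReal.ofReal (a + lam' * s) := ENNReal.ofReal_le_ofReal hkey
          _ = g y + lam (m+1) / ENNReal.ofReal (y ^ ρ) := by
              rw [ENNReal.ofReal_add (by linarith) (by positivity),
                ENNReal.ofReal_toReal hgtop, ENNReal.ofReal_mul hlam'0,
                ENNReal.ofReal_toReal hlamTop, hdiv_eq _ y hy0]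
    -- iterate the gain
    have hgain2 : ∀ n : ℕ, (n : ℝ≥0∞) * ENNReal.ofReal δ ≤ lam (n+1) := by
      intro n
      induction n with
      | zero => simp
      | succ n ih =>
        push_cast
        calc ((n:ℝ≥0∞) + 1) * ENNReal.ofReal δ
            = (n:ℝ≥0∞) * ENNReal.ofReal δ + ENNReal.ofReal δ := by ring
          _ ≤ lam (n+1) + ENNReal.ofReal δ := add_le_add_left ih _
          _ ≤ lam (n+2) := hgain (n+1) (by omega)
    obtain ⟨n, hn⟩ := exists_nat_gt (ls' / δ)
    have hnδ : ls' < n * δ := by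
      rw [div_lt_iff₀ hδpos] at hn
      linarith
    have h1 : (n : ℝ≥0∞) * ENNReal.ofReal δ = ENNReal.ofReal (n * δ) := by
      rw [ENNReal.ofReal_mul (by positivity), ENNReal.ofReal_natCast]
    have h2 : ls < ENNReal.ofReal (n * δ) := by
      calc ls = ENNReal.ofReal ls' := (ENNReal.ofReal_toReal hls_top).symm
        _ < ENNReal.ofReal (n * δ) :=
          (ENNReal.ofReal_lt_ofReal_iff (lt_trans hls'pos hnδ)).2 hnδ
    have h3 : lam (n+1) ≤ ls := hub (n+1) (by omega)
    rw [← h1] at h2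
    exact absurd (le_trans (hgain2 n) h3) h2.not_ge
  -- conclude
  refine ⟨hstep, ?_⟩
  rw [← hLeq]
  refine tendsto_order.2 ⟨fun a ha => ?_, fun b hb => ?_⟩
  · rw [hL_def] at ha
    obtain ⟨n, hn⟩ := lt_iSup_iff.1 ha
    refine Filter.eventually_atTop.2 ⟨n+1, fun m hm => ?_⟩
    exact lt_of_lt_of_le hn (hmono2 (n+1) m (by omega) hm)
  · refine Filter.eventually_atTop.2 ⟨1, fun m hm => ?_⟩
    have h1 := hub m hm
    rw [← hLeq] at h1
    exact lt_of_le_of_lt h1 hb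
end

section
/- Let (A,B) be nonnegative random variables admitting a (ρ,H)-local dependence measure g, and let X be a nonnegative random variable independent of (A,B) solving X =_d AX+B. If s := limsup_{ε→0+} (-log P(X < ε))/H(ε) < ∞, then s ≤ λ*, where λ* = inf_{y>1} { (y^ρ/(y^ρ-1)) g(y) }. -/
open MeasureTheory ProbabilityTheory Filter Set Topology
open scoped ENNReal

lemma negLog_mul_le {p q : ℝ≥0∞} (hp : p ≤ 1) (hq : q ≤ 1) :
    negLog (p * q) ≤ negLog p + negLog q := by
  unfold negLog
  rcases eq_or_ne p 0 with hp0 | hp0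
  · simp [hp0]
  rcases eq_or_ne q 0 with hq0 | hq0
  · simp [hq0]
  have hpq : p * q ≠ 0 := mul_ne_zero hp0 hq0
  rw [if_neg hp0, if_neg hq0, if_neg hpq]
  have hpt : p ≠ ⊤ := (hp.trans_lt ENNReal.one_lt_top).ne
  have hqt : q ≠ ⊤ := (hq.trans_lt ENNReal.one_lt_top).ne
  have h1 : (p * q).toReal = p.toReal * q.toReal := ENNReal.toReal_mul
  have hp1 : p.toReal ≤ 1 := by
    simpa using ENNReal.toReal_le_toReal hpt ENNReal.one_ne_top |>.2 hp
  have hq1 : q.toReal ≤ 1 := by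
    simpa using ENNReal.toReal_le_toReal hqt ENNReal.one_ne_top |>.2 hq
  have hp0' : 0 < p.toReal := ENNReal.toReal_pos hp0 hpt
  have hq0' : 0 < q.toReal := ENNReal.toReal_pos hq0 hqt
  rw [h1, Real.log_mul hp0'.ne' hq0'.ne', neg_add]
  rw [ENNReal.ofReal_add (by nlinarith [Real.log_nonpos hp0'.le hp1]) (by nlinarith [Real.log_nonpos hq0'.le hq1])]

lemma pointwise_ineq {Ω : Type*} [MeasurableSpace Ω] (μ : Measure Ω) [IsProbabilityMeasure μ]
    (A B X : Ω → ℝ) (hA : Measurable A) (hB : Measurable B) (hX : Measurable X)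
    (hA0 : ∀ᵐ ω ∂μ, 0 ≤ A ω)
    (hindep : IndepFun X (fun ω => (A ω, B ω)) μ)
    (hfix : μ.map X = μ.map (fun ω => A ω * X ω + B ω))
    (ε y : ℝ) :
    negLog (μ {ω | X ω < ε}) ≤
      negLog (μ {ω | X ω < ε * y}) + negLog (μ {ω | ε * A ω * y + B ω < ε}) := by
  have hf : Measurable fun ω => A ω * X ω + B ω := (hA.mul hX).add hB
  have step1 : μ {ω | X ω < ε} = μ {ω | A ω * X ω + B ω < ε} := by
    have h1 : μ.map X (Iio ε) = μ.map (fun ω => A ω * X ω + B ω) (Iio ε) := by rw [hfix]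
    rwa [Measure.map_apply hX measurableSet_Iio,
      Measure.map_apply hf measurableSet_Iio] at h1
  have step3 : μ ({ω | X ω < ε * y} ∩ {ω | ε * A ω * y + B ω < ε})
      = μ {ω | X ω < ε * y} * μ {ω | ε * A ω * y + B ω < ε} := by
    have hS : MeasurableSet {p : ℝ × ℝ | ε * p.1 * y + p.2 < ε} :=
      measurableSet_lt (((measurable_fst.const_mul ε).mul_const y).add measurable_snd)
        measurable_const
    exact hindep.measure_inter_preimage_eq_mul (Iio (ε * y)) _ measurableSet_Iio hS
  have step2 : μ ({ω | X ω < ε * y} ∩ {ω | ε * A ω * y + B ω < ε})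
      ≤ μ {ω | A ω * X ω + B ω < ε} := by
    apply measure_mono_ae
    filter_upwards [hA0] with ω hAω
    rintro ⟨h1, h2⟩
    simp only [Set.mem_setOf_eq] at *
    calc A ω * X ω + B ω ≤ A ω * (ε * y) + B ω :=
          add_le_add_left (mul_le_mul_of_nonneg_left h1.le hAω) _
      _ = ε * A ω * y + B ω := by ring
      _ < ε := h2
  calc negLog (μ {ω | X ω < ε})
      ≤ negLog (μ {ω | X ω < ε * y} * μ {ω | ε * A ω * y + B ω < ε}) := by
        apply negLog_anti
        rw [step1, ← step3]; exact step2
    _ ≤ _ := negLog_mul_le prob_le_one prob_le_one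

/-- Lemma `lem:limsup1`.
If `(A,B)` has `(ρ,H)`-LDM `g`, `X` is a nonnegative random variable, independent of
`(A,B)`, solving `X =_d AX + B`, and `s := limsup_{ε→0⁺} (-log P(X < ε))/H(ε) < ∞`,
then `s ≤ λ*`. -/
theorem stmt10 {Ω : Type*} [MeasurableSpace Ω] (μ : Measure Ω) [IsProbabilityMeasure μ]
    (H : ℝ → ℝ) (ρ : ℝ) (hH : IsRVatZero H ρ)
    (A B X : Ω → ℝ) (hA : Measurable A) (hB : Measurable B) (hX : Measurable X)
    (hA0 : ∀ᵐ ω ∂μ, 0 ≤ A ω) (hB0 : ∀ᵐ ω ∂μ, 0 ≤ B ω) (hX0 : ∀ᵐ ω ∂μ, 0 ≤ X ω)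
    (g : ℝ → ℝ≥0∞) (hg : IsLDM μ A B H g)
    (hindep : IndepFun X (fun ω => (A ω, B ω)) μ)
    (hfix : μ.map X = μ.map (fun ω => A ω * X ω + B ω))
    (hfin : Filter.limsup (fun ε => negLog (μ {ω | X ω < ε}) / ENNReal.ofReal (H ε))
        (nhdsWithin 0 (Set.Ioi 0)) ≠ ⊤) :
    Filter.limsup (fun ε => negLog (μ {ω | X ω < ε}) / ENNReal.ofReal (H ε))
        (nhdsWithin 0 (Set.Ioi 0)) ≤ lambdaStar g ρ := by
  set l : Filter ℝ := nhdsWithin 0 (Set.Ioi 0) with hl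
  set F : ℝ → ℝ≥0∞ := fun ε => negLog (μ {ω | X ω < ε}) / ENNReal.ofReal (H ε) with hFdef
  rw [lambdaStar]
  refine le_iInf₂ fun y hy => ?_
  have hy1 : (1:ℝ) < y := hy
  have hy0 : (0:ℝ) < y := lt_trans one_pos hy1
  have hρ := hH.rho_pos
  have hyρ : 1 < y ^ ρ := (Real.one_lt_rpow_iff_of_pos hy0).mpr (Or.inl ⟨hy1, hρ⟩)
  have hyneg : y ^ (-ρ) = (y ^ ρ)⁻¹ := Real.rpow_neg hy0.le ρ
  have hKpos : 0 < y ^ ρ / (y ^ ρ - 1) := div_pos (by linarith) (by linarith)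
  rcases eq_or_ne (g y) ⊤ with hgy | hgy
  · rw [hgy, ENNReal.mul_top (ENNReal.ofReal_pos.2 hKpos).ne']
    exact le_top
  set c₀ : ℝ≥0∞ := ENNReal.ofReal (y ^ (-ρ)) with hc₀
  set G : ℝ → ℝ≥0∞ :=
    fun ε => negLog (μ {ω | ε * A ω * y + B ω < ε}) / ENNReal.ofReal (H ε) with hGdef
  set m : ℝ → ℝ := fun ε => ε * y with hmdef
  set c : ℝ → ℝ≥0∞ := fun ε => ENNReal.ofReal (H (ε * y) / H ε) with hcdef
  have hm : Tendsto m l l := by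
    have t1 : Tendsto m (nhds 0) (nhds 0) := by
      simpa using (tendsto_id.mul_const y : Tendsto (fun x : ℝ => x * y) (nhds 0) (nhds (0 * y)))
    have t2 : Tendsto m (Filter.principal (Set.Ioi 0)) (Filter.principal (Set.Ioi 0)) :=
      tendsto_principal_principal.2 fun x hx => mul_pos hx hy0
    exact t1.inf t2
  have hFw : ∀ᶠ ε in l, F ε ≤ F (m ε) * c ε + G ε := by
    filter_upwards [self_mem_nhdsWithin] with ε hε
    have hε0 : (0:ℝ) < ε := hε
    have hHε : 0 < H ε := hH.pos ε hε
    have hHεy : 0 < H (ε * y) := hH.pos _ (mul_pos hε0 hy0)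
    have key := pointwise_ineq μ A B X hA hB hX hA0 hindep hfix ε y
    have h1 : F ε ≤ (negLog (μ {ω | X ω < ε * y}) + negLog (μ {ω | ε * A ω * y + B ω < ε}))
        / ENNReal.ofReal (H ε) := ENNReal.div_le_div_right key _
    rw [ENNReal.add_div] at h1
    refine h1.trans (le_of_eq ?_)
    have hk0 : ENNReal.ofReal (H (ε * y)) ≠ 0 := (ENNReal.ofReal_pos.2 hHεy).ne'
    have hkt : ENNReal.ofReal (H (ε * y)) ≠ ⊤ := ENNReal.ofReal_ne_top
    congr 1
    show negLog (μ {ω | X ω < ε * y}) / ENNReal.ofReal (H ε)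
      = negLog (μ {ω | X ω < ε * y}) / ENNReal.ofReal (H (ε * y))
        * ENNReal.ofReal (H (ε * y) / H ε)
    rw [ENNReal.ofReal_div_of_pos hHε, div_eq_mul_inv, div_eq_mul_inv, div_eq_mul_inv,
      mul_assoc]
    congr 1
    rw [← mul_assoc, ENNReal.inv_mul_cancel hk0 hkt, one_mul]
  have hlim_c : Tendsto c l (nhds c₀) := by
    have h2 : Tendsto (fun ε : ℝ => H (ε * y) / H ε) l (nhds (y ^ (-ρ))) := by
      simpa [mul_comm] using hH.rv y (Set.mem_Ioi.mpr hy0)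
    exact ENNReal.tendsto_ofReal h2
  have hlim_G : Tendsto G l (nhds (g y)) := hg y hy0.le
  have hsm : limsup (F ∘ m) l ≤ limsup F l := by
    rw [limsup_comp]
    exact limsup_le_limsup_of_le hm
  have hsfin : limsup F l ≠ ⊤ := hfin
  have key2 : limsup F l ≤ limsup F l * c₀ + g y := by
    apply ENNReal.le_of_forall_pos_le_add
    intro δ hδ _
    have hGev : ∀ᶠ ε in l, G ε ≤ g y + δ :=
      hlim_G.eventually_le_const (ENNReal.lt_add_right hgy (by exact_mod_cast hδ.ne'))
    have hstep : limsup F l ≤ limsup (fun ε => F (m ε) * c ε) l + (g y + δ) := by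
      calc limsup F l ≤ limsup (fun ε => F (m ε) * c ε + (g y + δ)) l := by
            refine limsup_le_limsup ?_ ⟨0, fun a _ => zero_le⟩
              ⟨⊤, Filter.Eventually.of_forall fun _ => le_top⟩
            filter_upwards [hFw, hGev] with ε h1 h2
            exact h1.trans (add_le_add_right h2 _)
        _ = limsup (fun ε => F (m ε) * c ε) l + (g y + δ) :=
            limsup_add_const l _ _ ⟨⊤, Filter.Eventually.of_forall fun _ => le_top⟩
              ⟨0, fun a _ => zero_le⟩
    have hmul : limsup (fun ε => F (m ε) * c ε) l ≤ limsup F l * c₀ := by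
      have h3 : limsup (fun ε => (F ∘ m) ε * c ε) l ≤ limsup (F ∘ m) l * limsup c l := by
        apply ENNReal.limsup_mul_le'
        · right; rw [hlim_c.limsup_eq]; exact ENNReal.ofReal_ne_top
        · left; exact (hsm.trans_lt (lt_top_iff_ne_top.2 hsfin)).ne
      rw [hlim_c.limsup_eq] at h3
      exact h3.trans (mul_le_mul_left hsm _)
    calc limsup F l ≤ limsup F l * c₀ + (g y + δ) := hstep.trans (add_le_add_left hmul _)
      _ = limsup F l * c₀ + g y + δ := by rw [add_assoc]
  -- algebra
  have hypos : (0:ℝ) < y ^ (-ρ) := Real.rpow_pos_of_pos hy0 _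
  have hpos : (0:ℝ) < 1 - y ^ (-ρ) := by
    rw [hyneg]
    have : (y ^ ρ)⁻¹ < 1 := inv_lt_one_of_one_lt₀ hyρ
    linarith
  have hd : (1:ℝ≥0∞) - c₀ = ENNReal.ofReal (1 - y ^ (-ρ)) := by
    rw [hc₀, ← ENNReal.ofReal_one, ← ENNReal.ofReal_sub _ hypos.le]
  have hsub : limsup F l * ((1:ℝ≥0∞) - c₀) ≤ g y := by
    rw [ENNReal.mul_sub (fun _ _ => hsfin), mul_one]
    exact tsub_le_iff_right.2 (key2.trans (le_of_eq (add_comm _ _)))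
  have h1c0 : (1:ℝ≥0∞) - c₀ ≠ 0 := by
    rw [hd]; exact (ENNReal.ofReal_pos.2 hpos).ne'
  have h1ct : (1:ℝ≥0∞) - c₀ ≠ ⊤ := by rw [hd]; exact ENNReal.ofReal_ne_top
  have hfinal : limsup F l ≤ g y / ((1:ℝ≥0∞) - c₀) :=
    (ENNReal.le_div_iff_mul_le (Or.inl h1c0) (Or.inl h1ct)).2 hsub
  refine hfinal.trans (le_of_eq ?_)
  rw [div_eq_mul_inv, hd, ← ENNReal.ofReal_inv_of_pos hpos, mul_comm]
  congr 1
  rw [hyneg]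
  have hne : y ^ ρ ≠ 0 := by positivity
  have hne1 : y ^ ρ - 1 ≠ 0 := by linarith
  field_simp
end
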